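/- An ultrafilter U on ℕ is maximal with respect to finite embeddability (i.e., V ⊴_fe U for every ultrafilter V) if and only if every set A ∈ U is piecewise syndetic. Equivalently, the set of maximal ultrafilters equals the closure of the smallest two-sided ideal K(βℕ,⊕). -/

import Mathlib

/-- A set of naturals is thick if it contains arbitrarily long intervals. -/
def Thick (A : Set ℕ) : Prop := ∀ k : ℕ, ∃ a : ℕ, ∀ i < k, a + i ∈ A

/-- `A` is piecewise syndetic if some finite union of translates `A - i`, `i ≤ n`, is thick. -/
def PiecewiseSyndetic (A : Set ℕ) : Prop :=
  ∃ n : ℕ, Thick {m : ℕ | ∃ i ≤ n, m + i ∈ A}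

/-- `A ≤_fe B`: every finite subset of `A` has a translate contained in `B`. -/
def fe (A B : Set ℕ) : Prop :=
  ∀ F : Finset ℕ, ↑F ⊆ A → ∃ n : ℕ, ∀ a ∈ F, n + a ∈ B

/-- The sum of ultrafilters on ℕ: `A ∈ usum U V ↔ {n | {m | n + m ∈ A} ∈ V} ∈ U`. -/
def usum (U V : Ultrafilter ℕ) : Ultrafilter ℕ :=
  U.bind fun n => V.map fun m => n + m

/-- Finite embeddability of ultrafilters: `U ⊴_fe V` iff every `B ∈ V`
contains a finitely embedded `A ∈ U`. -/
def ufe (U V : Ultrafilter ℕ) : Prop := ∀ B ∈ V, ∃ A ∈ U, fe A B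

/-- Two-sided ideals of the semigroup `(βℕ, ⊕)`. -/
def IsTwoSidedIdeal (I : Set (Ultrafilter ℕ)) : Prop :=
  I.Nonempty ∧ ∀ U ∈ I, ∀ V : Ultrafilter ℕ, usum U V ∈ I ∧ usum V U ∈ I

/-- `K(βℕ, ⊕)`, the smallest two-sided ideal of `(βℕ, ⊕)`. -/
def KIdeal : Set (Ultrafilter ℕ) := ⋂₀ {I : Set (Ultrafilter ℕ) | IsTwoSidedIdeal I}

/-!
Piecewise syndeticity is partition regular, so some ultrafilter consists of piecewise syndetic
sets; and it passes from `A` to `B` whenever `A ≤_fe B`. Hence every member of a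
`⊴_fe`-maximal ultrafilter is piecewise syndetic. Conversely, a piecewise syndetic `B` receives a
finite embedding of a member of any ultrafilter: colour each `j` by a shift `i ≤ n` that carries
`j` into `B` along an ultrafilter containing every shift of the thick set `⋃ i ≤ n, (B - i)`,
and take the large colour class.

The ultrafilters with only piecewise syndetic members form a closed two-sided ideal, hence
contain `closure K`; conversely every piecewise syndetic set is a member of some element of `K`.
-/

open Filter Set

attribute [local instance] Ultrafilter.add Ultrafilter.addSemigroup

lemma Thick.mono {A B : Set ℕ} (hA : Thick A) (h : A ⊆ B) : Thick B :=
  fun k => (hA k).imp fun _ ha i hi => h (ha i hi)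

lemma PiecewiseSyndetic.mono {A B : Set ℕ} (hA : PiecewiseSyndetic A) (h : A ⊆ B) :
    PiecewiseSyndetic B :=
  let ⟨n, hn⟩ := hA
  ⟨n, hn.mono fun _ ⟨i, hi, hm⟩ => ⟨i, hi, h hm⟩⟩

lemma not_piecewiseSyndetic_empty : ¬ PiecewiseSyndetic ∅ := fun ⟨_, hn⟩ =>
  let ⟨_, ha⟩ := hn 1
  let ⟨_, _, hi⟩ := ha 0 one_pos
  hi

lemma piecewiseSyndetic_univ : PiecewiseSyndetic univ :=
  ⟨0, fun _ => ⟨0, fun _ _ => ⟨0, le_rfl, trivial⟩⟩⟩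

/-- If every window of length `k` contains a point with no element of `A` among its next `n`
successors, then each point of a window covered by the `n`-shifts of `A ∪ B` reaches `B` within
`n + k` steps. -/
lemma PiecewiseSyndetic.union {A B : Set ℕ} (h : PiecewiseSyndetic (A ∪ B)) :
    PiecewiseSyndetic A ∨ PiecewiseSyndetic B := by
  obtain ⟨n, hT⟩ := h
  by_cases hA : Thick {m | ∃ i ≤ n, m + i ∈ A}
  · exact .inl ⟨n, hA⟩
  obtain ⟨k, hk⟩ : ∃ k, ∀ a, ∃ j < k, ∀ i ≤ n, a + j + i ∉ A := by
    simpa [Thick] using hA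
  refine .inr ⟨n + k, fun L => ?_⟩
  obtain ⟨a, ha⟩ := hT (L + k)
  refine ⟨a, fun x hx => ?_⟩
  obtain ⟨j, hj, hjA⟩ := hk (a + x)
  obtain ⟨i, hi, hmem⟩ := ha (x + j) (by omega)
  rw [← add_assoc] at hmem
  exact ⟨j + i, by omega, by rw [← add_assoc]; exact hmem.resolve_left (hjA i hi)⟩

def piecewiseSyndeticFilter : Filter ℕ :=
  comk (¬ PiecewiseSyndetic ·) not_piecewiseSyndetic_empty
    (fun _ ht _ hst hs => ht (hs.mono hst)) (fun _ hs _ ht hst => hst.union.elim hs ht)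

instance : piecewiseSyndeticFilter.NeBot :=
  ⟨fun h => by
    have : ¬ PiecewiseSyndetic ∅ᶜ := empty_mem_iff_bot.2 h
    exact this (compl_empty ▸ piecewiseSyndetic_univ)⟩

lemma Ultrafilter.coe_le_piecewiseSyndeticFilter_iff {U : Ultrafilter ℕ} :
    ↑U ≤ piecewiseSyndeticFilter ↔ ∀ A ∈ U, PiecewiseSyndetic A := by
  refine ⟨fun h A hA => ?_, fun h A hA => ?_⟩
  · by_contra hps
    exact U.compl_notMem_iff.2 hA (h (compl_mem_comk.2 hps))
  · by_contra hA'
    exact hA (h _ (U.compl_mem_iff_notMem.2 hA'))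

lemma exists_ultrafilter_forall_piecewiseSyndetic :
    ∃ U : Ultrafilter ℕ, ∀ A ∈ U, PiecewiseSyndetic A :=
  ⟨.of piecewiseSyndeticFilter,
    Ultrafilter.coe_le_piecewiseSyndeticFilter_iff.1 (Ultrafilter.of_le _)⟩

lemma Ultrafilter.isClosed_setOf_coe_le {α : Type*} (f : Filter α) :
    IsClosed {U : Ultrafilter α | ↑U ≤ f} := by
  convert isClosed_biInter fun s (_ : s ∈ f) => ultrafilter_isClosed_basic s
  ext U
  simp [Filter.le_def]

lemma isClosed_setOf_forall_piecewiseSyndetic :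
    IsClosed {U : Ultrafilter ℕ | ∀ A ∈ U, PiecewiseSyndetic A} := by
  simpa only [Ultrafilter.coe_le_piecewiseSyndeticFilter_iff] using
    Ultrafilter.isClosed_setOf_coe_le piecewiseSyndeticFilter

lemma Thick.of_fe {T S : Set ℕ} (hT : Thick T) (h : fe T S) : Thick S := by
  intro k
  obtain ⟨a, ha⟩ := hT k
  obtain ⟨t, ht⟩ := h ((Finset.range k).image (a + ·)) (by simpa [Set.subset_def] using ha)
  refine ⟨t + a, fun i hi => ?_⟩
  simpa [add_assoc] using ht (a + i) (Finset.mem_image_of_mem _ (Finset.mem_range.2 hi))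

lemma fe.setOf_exists_le_add_mem {C A : Set ℕ} (h : fe C A) (n : ℕ) :
    fe {m | ∃ i ≤ n, m + i ∈ C} {m | ∃ i ≤ n, m + i ∈ A} := by
  intro F hF
  choose g hg hgC using fun x : F => hF x.2
  obtain ⟨t, ht⟩ := h (F.attach.image fun x => x + g x) <| by
    rw [Finset.coe_image]; rintro _ ⟨x, -, rfl⟩; exact hgC x
  exact ⟨t, fun x hx => ⟨g ⟨x, hx⟩, hg _, by
    simpa [add_assoc] using ht _ (Finset.mem_image_of_mem _ (F.mem_attach ⟨x, hx⟩))⟩⟩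

lemma PiecewiseSyndetic.of_fe {C A : Set ℕ} (hC : PiecewiseSyndetic C) (h : fe C A) :
    PiecewiseSyndetic A :=
  let ⟨n, hn⟩ := hC
  ⟨n, hn.of_fe (h.setOf_exists_le_add_mem n)⟩

lemma Ultrafilter.exists_le_of_setOf_exists_le_mem {α : Type*} {p : Ultrafilter α}
    {s : ℕ → Set α} {n : ℕ} (h : {a | ∃ i ≤ n, a ∈ s i} ∈ p) : ∃ i ≤ n, s i ∈ p := by
  have hU : {a | ∃ i ≤ n, a ∈ s i} = ⋃ i ∈ Iic n, s i := by ext; simp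
  rw [hU] at h
  simpa using (Ultrafilter.finite_biUnion_mem_iff (finite_Iic n)).1 h

/-- The image, under the starting points of ever longer intervals of `T`, of an ultrafilter
finer than `atTop`. -/
lemma Thick.exists_ultrafilter_forall_add_mem {T : Set ℕ} (hT : Thick T) :
    ∃ p : Ultrafilter ℕ, ∀ n, {m | n + m ∈ T} ∈ p := by
  choose a ha using hT
  refine ⟨(Ultrafilter.of atTop).map a, fun n => Ultrafilter.of_le atTop ?_⟩
  exact mem_atTop_sets.2 ⟨n + 1, fun k hk => by simpa [add_comm] using ha k n (by omega)⟩

lemma PiecewiseSyndetic.exists_mem_fe {B : Set ℕ} (hB : PiecewiseSyndetic B)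
    (V : Ultrafilter ℕ) : ∃ A ∈ V, fe A B := by
  obtain ⟨n, hT⟩ := hB
  obtain ⟨p, hp⟩ := hT.exists_ultrafilter_forall_add_mem
  choose c hcn hc using fun j => Ultrafilter.exists_le_of_setOf_exists_le_mem
    (s := fun i => {m | j + m + i ∈ B}) (hp j)
  obtain ⟨i, -, hi⟩ := Ultrafilter.exists_le_of_setOf_exists_le_mem (p := V)
    (s := fun i => {j | c j = i}) (univ_mem' fun j => ⟨c j, hcn j, rfl⟩)
  refine ⟨_, hi, fun F hF => ?_⟩
  obtain ⟨m, hm⟩ := Ultrafilter.nonempty_of_mem ((biInter_finset_mem F).2 fun j _ => hc j)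
  refine ⟨m + i, fun j hj => ?_⟩
  have hcj : c j = i := hF hj
  simpa [hcj, add_comm, add_left_comm, add_assoc] using mem_iInter₂.1 hm j hj

theorem forall_ufe_iff_forall_piecewiseSyndetic (U : Ultrafilter ℕ) :
    (∀ V, ufe V U) ↔ ∀ A ∈ U, PiecewiseSyndetic A := by
  refine ⟨fun h A hA => ?_, fun h V B hB => (h B hB).exists_mem_fe V⟩
  obtain ⟨V, hV⟩ := exists_ultrafilter_forall_piecewiseSyndetic
  obtain ⟨C, hC, hCA⟩ := h V A hA
  exact (hV C hC).of_fe hCA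

section ClosedLeftIdeal

variable {M : Type*} [AddSemigroup M] [TopologicalSpace M]

def IsClosedLeftIdeal (L : Set M) : Prop :=
  L.Nonempty ∧ IsClosed L ∧ ∀ u ∈ L, ∀ v, v + u ∈ L

lemma exists_minimal_isClosedLeftIdeal [CompactSpace M] [Nonempty M] :
    ∃ L : Set M, Minimal IsClosedLeftIdeal L := by
  have chain_bound : ∀ c ⊆ {L : Set M | IsClosedLeftIdeal L}, IsChain (· ⊆ ·) c → c.Nonempty →
      ∃ lb ∈ {L : Set M | IsClosedLeftIdeal L}, ∀ s ∈ c, lb ⊆ s := by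
    intro c hc hchain hne
    have : Nonempty c := hne.to_subtype
    refine ⟨⋂₀ c, ⟨?_, isClosed_sInter fun C hC => (hc hC).2.1,
      fun u hu v => mem_sInter.2 fun C hC => (hc hC).2.2 u (hu C hC) v⟩,
      fun _ => sInter_subset_of_mem⟩
    exact IsCompact.nonempty_sInter_of_directed_nonempty_isCompact_isClosed
      (IsChain.directedOn hchain.symm) (fun C hC => (hc hC).1) (fun C hC => (hc hC).2.1.isCompact)
      (fun C hC => (hc hC).2.1)
  obtain ⟨L, -, hL⟩ := zorn_superset_nonempty _ chain_bound univ
    ⟨univ_nonempty, isClosed_univ, fun _ _ _ => trivial⟩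
  exact ⟨L, hL⟩

/-- For `w ∈ L ∩ I`, the closed left ideal `M + w` lies in `L`, hence equals it, and lies
in `I`. -/
lemma Minimal.isClosedLeftIdeal_subset [CompactSpace M] [T2Space M]
    (hcont : ∀ r : M, Continuous (· + r)) {L : Set M} (hL : Minimal IsClosedLeftIdeal L)
    {I : Set M} (hI : I.Nonempty) (hright : ∀ u ∈ I, ∀ v, u + v ∈ I)
    (hleft : ∀ u ∈ I, ∀ v, v + u ∈ I) : L ⊆ I := by
  obtain ⟨v, hv⟩ := hI
  obtain ⟨u, hu⟩ := hL.1.1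
  set w := v + u
  have hrange : IsClosedLeftIdeal (range (· + w)) :=
    ⟨⟨_, mem_range_self v⟩, (isCompact_range (hcont w)).isClosed,
      by rintro _ ⟨x, rfl⟩ y; exact ⟨y + x, add_assoc y x w⟩⟩
  have hsub : range (· + w) ⊆ L := by
    rintro _ ⟨x, rfl⟩; exact hL.1.2.2 w (hL.1.2.2 u hu v) x
  rintro x hx
  obtain ⟨y, rfl⟩ := hL.2 hrange hsub hx
  exact hleft w (hright v hv u) y

end ClosedLeftIdeal

lemma kIdeal_nonempty : KIdeal.Nonempty := by
  obtain ⟨L, hL⟩ := exists_minimal_isClosedLeftIdeal (M := Ultrafilter ℕ)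
  obtain ⟨U, hU⟩ := hL.1.1
  exact ⟨U, mem_sInter.2 fun I hI => hL.isClosedLeftIdeal_subset Ultrafilter.continuous_add_left
    hI.1 (fun U hU V => (hI.2 U hU V).1) (fun U hU V => (hI.2 U hU V).2) hU⟩

lemma usum_mem_kIdeal {U : Ultrafilter ℕ} (hU : U ∈ KIdeal) (V : Ultrafilter ℕ) :
    usum U V ∈ KIdeal ∧ usum V U ∈ KIdeal :=
  ⟨mem_sInter.2 fun I hI => (hI.2 U (hU I hI) V).1, mem_sInter.2 fun I hI => (hI.2 U (hU I hI) V).2⟩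

lemma mem_usum {A : Set ℕ} {U V : Ultrafilter ℕ} :
    A ∈ usum U V ↔ {n | {m | n + m ∈ A} ∈ V} ∈ U := Iff.rfl

/-- A translate of `U + p` works, where `U ∈ K` and `p` contains every shift of the thick set
`⋃ i ≤ n, (A - i)`. -/
lemma PiecewiseSyndetic.exists_mem_kIdeal {A : Set ℕ} (hA : PiecewiseSyndetic A) :
    ∃ W ∈ KIdeal, A ∈ W := by
  obtain ⟨n, hT⟩ := hA
  obtain ⟨p, hp⟩ := hT.exists_ultrafilter_forall_add_mem
  obtain ⟨U, hU⟩ := kIdeal_nonempty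
  obtain ⟨i, -, hi⟩ := Ultrafilter.exists_le_of_setOf_exists_le_mem (p := usum U p)
    (s := fun i => {m | m + i ∈ A}) (mem_usum.2 (univ_mem' hp))
  refine ⟨usum (pure i) (usum U p), (usum_mem_kIdeal (usum_mem_kIdeal hU p).1 _).2, ?_⟩
  simpa [mem_usum, add_comm] using hi

lemma fe_setOf_add_mem (A : Set ℕ) (V : Ultrafilter ℕ) : fe {n | {m | n + m ∈ A} ∈ V} A := by
  intro F hF
  obtain ⟨m, hm⟩ := Ultrafilter.nonempty_of_mem ((biInter_finset_mem F).2 fun j hj => hF hj)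
  exact ⟨m, fun j hj => by simpa [add_comm] using mem_iInter₂.1 hm j hj⟩

lemma fe_setOf_add_mem_self (A : Set ℕ) (k : ℕ) : fe {m | k + m ∈ A} A :=
  fun _ hF => ⟨k, fun _ ha => hF ha⟩

lemma isTwoSidedIdeal_setOf_forall_piecewiseSyndetic :
    IsTwoSidedIdeal {U : Ultrafilter ℕ | ∀ A ∈ U, PiecewiseSyndetic A} := by
  refine ⟨exists_ultrafilter_forall_piecewiseSyndetic,
    fun U hU V => ⟨fun A hA => ?_, fun A hA => ?_⟩⟩
  · exact (hU _ (mem_usum.1 hA)).of_fe (fe_setOf_add_mem A V)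
  · obtain ⟨k, hk⟩ := Ultrafilter.nonempty_of_mem (mem_usum.1 hA)
    exact (hU _ hk).of_fe (fe_setOf_add_mem_self A k)

lemma closure_kIdeal : closure KIdeal = {U : Ultrafilter ℕ | ∀ A ∈ U, PiecewiseSyndetic A} := by
  refine (closure_minimal (sInter_subset_of_mem isTwoSidedIdeal_setOf_forall_piecewiseSyndetic)
    isClosed_setOf_forall_piecewiseSyndetic).antisymm fun U hU => ?_
  rw [ultrafilterBasis_is_basis.mem_closure_iff]
  rintro _ ⟨s, rfl⟩ hs
  obtain ⟨W, hWK, hsW⟩ := (hU s hs).exists_mem_kIdeal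
  exact ⟨W, hsW, hWK⟩

/-- `U` is `⊴_fe`-maximal iff all its members are piecewise syndetic;
equivalently, the maximal ultrafilters form the closure of `K(βℕ, ⊕)`. -/
theorem stmt11 :
    (∀ U : Ultrafilter ℕ,
      (∀ V : Ultrafilter ℕ, ufe V U) ↔ ∀ A ∈ U, PiecewiseSyndetic A) ∧
    {U : Ultrafilter ℕ | ∀ V : Ultrafilter ℕ, ufe V U} = closure KIdeal :=
  ⟨forall_ufe_iff_forall_piecewiseSyndetic,
    closure_kIdeal ▸ Set.ext forall_ufe_iff_forall_piecewiseSyndetic⟩
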